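/- Let G be a labeled acyclic locally finite digraph. For all x < y, the coproduct of the ab-index satisfies Δ(Ψ([x,y])) = Σ_{x < z < y} Ψ([x,z]) ⊗ Ψ([z,y]), where Δ is the letter-deleting coproduct on Z⟨a,b⟩. -/

import Mathlib

open scoped TensorProduct

noncomputable section

/-- `Z⟨a,b⟩`, the free associative `ℤ`-algebra on two noncommuting generators,
realized as the monoid algebra of the free monoid on two letters (letter `0` is `a`,
letter `1` is `b`). -/
abbrev FA := MonoidAlgebra ℤ (FreeMonoid (Fin 2))

def ofW (w : FreeMonoid (Fin 2)) : FA := MonoidAlgebra.of ℤ (FreeMonoid (Fin 2)) w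

/-- The letter-deleting coproduct on a word: delete one letter and split there. -/
def deltaWord (w : FreeMonoid (Fin 2)) : FA ⊗[ℤ] FA :=
  ∑ i ∈ Finset.range w.length,
    ofW (FreeMonoid.ofList (w.toList.take i)) ⊗ₜ[ℤ]
      ofW (FreeMonoid.ofList (w.toList.drop (i + 1)))

/-- The coproduct `Δ` on `Z⟨a,b⟩`, extended linearly from words. -/
def Delta : FA →ₗ[ℤ] FA ⊗[ℤ] FA :=
  (Finsupp.lsum ℤ fun w => LinearMap.toSpanSingleton ℤ _ (deltaWord w)) ∘ₗ
    (MonoidAlgebra.coeffLinearEquiv ℤ).toLinearMap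

/-- A labeled digraph: vertices, (multi-)edges with tail, head and labels in a set
`Λ` carrying a relation `rel`. -/
structure LDigraph where
  V : Type
  E : Type
  Λ : Type
  tail : E → V
  head : E → V
  lab : E → Λ
  rel : Λ → Λ → Prop

namespace LDigraph

variable (G : LDigraph)

/-- `IsPath x p y`: `p` is a directed path from `x` to `y` (the empty path requires `x = y`). -/
def IsPath : G.V → List G.E → G.V → Prop
  | x, [], y => x = y
  | x, e :: p, y => G.tail e = x ∧ IsPath (G.head e) p y

/-- `x ≤ y`: there is a directed path from `x` to `y`. -/
def Reaches (x y : G.V) : Prop := ∃ p, G.IsPath x p y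

/-- `x < y` in the order induced by directed paths. -/
def Lt (x y : G.V) : Prop := G.Reaches x y ∧ x ≠ y

/-- The digraph has no (nonempty) directed cycles. -/
def Acyclic : Prop := ∀ (x : G.V) (p : List G.E), p ≠ [] → ¬ G.IsPath x p x

/-- There are finitely many directed paths between any two vertices. -/
def LocallyFinite : Prop := ∀ x y : G.V, {p | G.IsPath x p y}.Finite

/-- A rising path: any two consecutive edge labels are related. -/
def Rising (p : List G.E) : Prop := List.Chain' (fun e f => G.rel (G.lab e) (G.lab f)) p

/-- A falling path: no two consecutive edge labels are related. -/
def Falling (p : List G.E) : Prop := List.Chain' (fun e f => ¬ G.rel (G.lab e) (G.lab f)) p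

open Classical in
/-- The descent word `u(p)` of a path, as an `ab`-monomial in
`Z⟨a,b⟩ = MonoidAlgebra ℤ (FreeMonoid (Fin 2))`; the letter `0` is `a` (ascent) and the
letter `1` is `b` (descent). -/
noncomputable def word (p : List G.E) : MonoidAlgebra ℤ (FreeMonoid (Fin 2)) :=
  MonoidAlgebra.of ℤ (FreeMonoid (Fin 2)) (FreeMonoid.ofList
    ((p.zip p.tail).map fun q => if G.rel (G.lab q.1) (G.lab q.2) then (0 : Fin 2) else 1))

/-- The `ab`-index `Ψ([x,y]) = Σ_p u(p)`, summing descent words over all directed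
paths from `x` to `y`. -/
noncomputable def Psi (x y : G.V) : MonoidAlgebra ℤ (FreeMonoid (Fin 2)) :=
  ∑ᶠ (p : List G.E) (_ : G.IsPath x p y), G.word p

end LDigraph

/-!
The descent word of a path `e₁ ⋯ e_k` has one letter for each interior vertex, comparing
`eᵢ` and `eᵢ₊₁`; deleting that letter leaves exactly the descent words of `e₁ ⋯ eᵢ` and
`eᵢ₊₁ ⋯ e_k`. Hence `Δ Ψ([x,y])` sums `u(q) ⊗ u(r)` over all ways of cutting a path from `x` to
`y` into two nonempty paths `q ++ r`, i.e. over all `z` with paths `q : x → z`, `r : z → y`.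
Acyclicity forces `x < z < y`, and concatenation is inverse to cutting.
-/

lemma Delta_ofW (w : FreeMonoid (Fin 2)) : Delta (ofW w) = deltaWord w := by
  simp [Delta, ofW, MonoidAlgebra.coeffLinearEquiv]

namespace LDigraph

variable (G : LDigraph)

open Classical in
def descentLetters (p : List G.E) : List (Fin 2) :=
  (p.zip p.tail).map fun q => if G.rel (G.lab q.1) (G.lab q.2) then (0 : Fin 2) else 1

lemma word_eq_ofW (p : List G.E) : G.word p = ofW (FreeMonoid.ofList (G.descentLetters p)) :=
  rfl

open Classical in
lemma descentLetters_cons_cons (e e' : G.E) (p : List G.E) :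
    G.descentLetters (e :: e' :: p) =
      (if G.rel (G.lab e) (G.lab e') then (0 : Fin 2) else 1) :: G.descentLetters (e' :: p) :=
  rfl

lemma length_descentLetters (p : List G.E) : (G.descentLetters p).length = p.length - 1 := by
  simp [descentLetters]

lemma take_descentLetters (i : ℕ) (p : List G.E) :
    (G.descentLetters p).take i = G.descentLetters (p.take (i + 1)) := by
  induction i generalizing p with
  | zero => match p with
    | [] | [_] | _ :: _ :: _ => rfl
  | succ i ih => match p with
    | [] | [_] => rfl
    | e :: e' :: p => rw [descentLetters_cons_cons, List.take_succ_cons, ih]; rfl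

lemma drop_descentLetters (i : ℕ) (p : List G.E) :
    (G.descentLetters p).drop i = G.descentLetters (p.drop i) := by
  induction i generalizing p with
  | zero => rfl
  | succ i ih => match p with
    | [] => rfl
    | [_] => simp [descentLetters]
    | e :: e' :: p => rw [descentLetters_cons_cons, List.drop_succ_cons, ih]; rfl

lemma Delta_word (p : List G.E) :
    Delta (G.word p) = ∑ i ∈ Finset.range (p.length - 1),
      G.word (p.take (i + 1)) ⊗ₜ[ℤ] G.word (p.drop (i + 1)) := by
  simp only [word_eq_ofW, Delta_ofW, deltaWord, FreeMonoid.length, FreeMonoid.toList_ofList,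
    length_descentLetters, take_descentLetters, drop_descentLetters]

def pathStart (y : G.V) : List G.E → G.V
  | [] => y
  | e :: _ => G.tail e

variable {G}

lemma IsPath.pathStart_eq {z y : G.V} {p : List G.E} (hp : G.IsPath z p y) :
    G.pathStart y p = z := by
  cases p with
  | nil => exact hp.symm
  | cons e p => exact hp.1

lemma isPath_append_iff {x y : G.V} {q r : List G.E} :
    G.IsPath x (q ++ r) y ↔ ∃ z, G.IsPath x q z ∧ G.IsPath z r y := by
  induction q generalizing x with
  | nil => exact ⟨fun h => ⟨x, rfl, h⟩, fun ⟨_, rfl, h⟩ => h⟩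
  | cons e q ih =>
    simp only [List.cons_append, IsPath, ih]
    exact ⟨fun ⟨h, z, hq, hr⟩ => ⟨z, ⟨h, hq⟩, hr⟩, fun ⟨z, ⟨h, hq⟩, hr⟩ => ⟨h, z, hq, hr⟩⟩

lemma lt_of_isPath (hac : G.Acyclic) {x z : G.V} {p : List G.E} (hp : G.IsPath x p z)
    (hne : p ≠ []) : G.Lt x z :=
  ⟨⟨p, hp⟩, by rintro rfl; exact hac x p hne hp⟩

lemma ne_nil_of_isPath_of_lt {x z : G.V} {p : List G.E} (hp : G.IsPath x p z)
    (h : G.Lt x z) : p ≠ [] := by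
  rintro rfl
  exact h.2 hp

lemma finite_setOf_lt_lt (hlf : G.LocallyFinite) (x y : G.V) :
    {z | G.Lt x z ∧ G.Lt z y}.Finite := by
  refine ((hlf x y).biUnion fun p _ => (p.map G.tail).finite_toSet).subset ?_
  rintro z ⟨⟨⟨q, hq⟩, -⟩, ⟨r, hr⟩, hzy⟩
  obtain ⟨e, r, rfl⟩ := List.exists_cons_of_ne_nil (ne_nil_of_isPath_of_lt hr ⟨⟨_, hr⟩, hzy⟩)
  exact Set.mem_biUnion (isPath_append_iff.2 ⟨z, hq, hr⟩) (by simp [← hr.1])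

lemma Psi_eq_sum (hlf : G.LocallyFinite) (x y : G.V) :
    G.Psi x y = ∑ p ∈ (hlf x y).toFinset, G.word p :=
  finsum_mem_eq_finite_toFinset_sum _ (hlf x y)

lemma isPath_take_drop (hac : G.Acyclic) {x y : G.V} {p : List G.E} (hp : G.IsPath x p y)
    {i : ℕ} (hi : i < p.length - 1) :
    let z := G.pathStart y (p.drop (i + 1))
    (G.Lt x z ∧ G.Lt z y) ∧ G.IsPath x (p.take (i + 1)) z ∧ G.IsPath z (p.drop (i + 1)) y := by
  rw [← List.take_append_drop (i + 1) p, isPath_append_iff] at hp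
  obtain ⟨z, hq, hr⟩ := hp
  have hqne : p.take (i + 1) ≠ [] := by rw [← List.length_pos_iff, List.length_take]; omega
  have hrne : p.drop (i + 1) ≠ [] := by rw [← List.length_pos_iff, List.length_drop]; omega
  rw [hr.pathStart_eq]
  exact ⟨⟨lt_of_isPath hac hq hqne, lt_of_isPath hac hr hrne⟩, hq, hr⟩

lemma sum_cuts_eq_sum_sum_sum {M : Type*} [AddCommMonoid M] (hac : G.Acyclic)
    (hlf : G.LocallyFinite) (x y : G.V) (f : List G.E → List G.E → M) :
    ∑ p ∈ (hlf x y).toFinset, ∑ i ∈ Finset.range (p.length - 1),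
        f (p.take (i + 1)) (p.drop (i + 1)) =
      ∑ z ∈ (finite_setOf_lt_lt hlf x y).toFinset,
        ∑ q ∈ (hlf x z).toFinset, ∑ r ∈ (hlf z y).toFinset, f q r := by
  simp_rw [← Finset.sum_product', Finset.sum_sigma']
  refine Finset.sum_nbij'
    (fun a => ⟨G.pathStart y (a.1.drop (a.2 + 1)), a.1.take (a.2 + 1), a.1.drop (a.2 + 1)⟩)
    (fun b => ⟨b.2.1 ++ b.2.2, b.2.1.length - 1⟩) ?_ ?_ ?_ ?_ (fun _ _ => rfl)
  · rintro ⟨p, i⟩ h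
    simp only [Finset.mem_sigma, Set.Finite.mem_toFinset, Set.mem_ofPred_eq, Finset.mem_range,
      Finset.mem_product] at h ⊢
    exact isPath_take_drop hac h.1 h.2
  · rintro ⟨z, q, r⟩ h
    simp only [Finset.mem_sigma, Set.Finite.mem_toFinset, Set.mem_ofPred_eq, Finset.mem_range,
      Finset.mem_product] at h ⊢
    obtain ⟨⟨hxz, hzy⟩, hq, hr⟩ := h
    have := List.length_pos_iff.2 (ne_nil_of_isPath_of_lt hq hxz)
    have := List.length_pos_iff.2 (ne_nil_of_isPath_of_lt hr hzy)
    exact ⟨isPath_append_iff.2 ⟨z, hq, hr⟩, by rw [List.length_append]; omega⟩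
  · rintro ⟨p, i⟩ h
    simp only [Finset.mem_sigma, Finset.mem_range] at h
    simp only [List.take_append_drop, List.length_take, Sigma.mk.injEq, heq_eq_eq, true_and]
    omega
  · rintro ⟨z, q, r⟩ h
    simp only [Finset.mem_sigma, Set.Finite.mem_toFinset, Set.mem_ofPred_eq,
      Finset.mem_product] at h
    obtain ⟨⟨hxz, -⟩, hq, hr⟩ := h
    have := List.length_pos_iff.2 (ne_nil_of_isPath_of_lt hq hxz)
    simp [Nat.sub_add_cancel this, hr.pathStart_eq]

end LDigraph

theorem Delta_Psi_general (G : LDigraph) (hacyclic : G.Acyclic) (hlocfin : G.LocallyFinite)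
    (x y : G.V) :
    Delta (G.Psi x y) =
      ∑ᶠ (z : G.V) (_ : G.Lt x z ∧ G.Lt z y), G.Psi x z ⊗ₜ[ℤ] G.Psi z y := by
  rw [G.Psi_eq_sum hlocfin, map_sum]
  simp_rw [G.Delta_word]
  rw [G.sum_cuts_eq_sum_sum_sum hacyclic hlocfin x y fun q r => G.word q ⊗ₜ[ℤ] G.word r,
    ← finsum_mem_eq_finite_toFinset_sum _ (G.finite_setOf_lt_lt hlocfin x y)]
  simp_rw [G.Psi_eq_sum hlocfin, TensorProduct.sum_tmul, TensorProduct.tmul_sum]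
  rfl

/-- Theorem 3.1: for a labeled acyclic locally finite digraph, the letter-deleting
coproduct of the `ab`-index satisfies
`Δ(Ψ([x,y])) = Σ_{x < z < y} Ψ([x,z]) ⊗ Ψ([z,y])`. -/
theorem Delta_Psi (G : LDigraph) (hacyclic : G.Acyclic) (hlocfin : G.LocallyFinite)
    (x y : G.V) (hxy : G.Lt x y) :
    Delta (G.Psi x y) =
      ∑ᶠ (z : G.V) (_ : G.Lt x z ∧ G.Lt z y), G.Psi x z ⊗ₜ[ℤ] G.Psi z y :=
  Delta_Psi_general G hacyclic hlocfin x y
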